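/- arXiv:2412.17134 — 2 statements merged into one kernel-verified Lean document; each statement's English description precedes it below -/
import Mathlib

section
/- Let x be an FPM. There exist prices p = (p_j)_{j∈G} making (x, p) an HZ equilibrium if and only if there exist earnings q = (q_j)_{j∈G} making (x, q) an HZ earnings equilibrium. -/
open Finset

/-- A fractional perfect matching. -/
def IsFPM {A G : Type*} [Fintype A] [Fintype G] (x : A → G → ℝ) : Prop :=
  (∀ i j, 0 ≤ x i j) ∧ (∀ i, ∑ j, x i j = 1) ∧ (∀ j, ∑ i, x i j = 1)

/-- An HZ equilibrium. -/
def IsHZEquilibrium {A G : Type*} [Fintype A] [Fintype G]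
    (u : A → G → ℝ) (x : A → G → ℝ) (p : G → ℝ) : Prop :=
  IsFPM x ∧ (∀ j, 0 ≤ p j) ∧ (∀ i, ∑ j, p j * x i j ≤ 1) ∧
  ∀ i, ∀ y : G → ℝ, (∀ j, 0 ≤ y j) → (∑ j, y j) = 1 → (∑ j, p j * y j) ≤ 1 →
    (∑ j, u i j * y j ≤ ∑ j, u i j * x i j) ∧
    ((∑ j, u i j * y j) = (∑ j, u i j * x i j) → ∑ j, p j * x i j ≤ ∑ j, p j * y j)

/-- An HZ earnings equilibrium. -/
def IsHZEarningsEquilibrium {A G : Type*} [Fintype A] [Fintype G]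
    (u : A → G → ℝ) (x : A → G → ℝ) (q : G → ℝ) : Prop :=
  IsFPM x ∧ (∀ j, 0 ≤ q j) ∧ (∀ i, 1 ≤ ∑ j, q j * x i j) ∧
  ∀ i, ∀ y : G → ℝ, (∀ j, 0 ≤ y j) → (∑ j, y j) = 1 → 1 ≤ (∑ j, q j * y j) →
    (∑ j, u i j * y j ≤ ∑ j, u i j * x i j) ∧
    ((∑ j, u i j * y j) = (∑ j, u i j * x i j) → ∑ j, q j * y j ≤ ∑ j, q j * x i j)

/-- Key algebraic identity: for a bundle `y` summing to 1, the affine transform of prices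
turns the value of `y` into the same affine transform of its old value. -/
lemma affine_sum {G : Type*} [Fintype G] (c : ℝ) (p y : G → ℝ) (hy : ∑ j, y j = 1) :
    ∑ j, ((c - p j) / (c - 1)) * y j = (c - ∑ j, p j * y j) / (c - 1) := by
  simp_rw [div_mul_eq_mul_div, ← Finset.sum_div, sub_mul]
  rw [Finset.sum_sub_distrib, ← Finset.mul_sum, hy, mul_one]

/-- An FPM x admits supporting HZ-equilibrium prices if and only if
it admits supporting HZ-earnings-equilibrium payments. -/
theorem hz_equilibrium_iff_earnings_equilibrium {A G : Type*} [Fintype A] [Fintype G]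
    (u : A → G → ℝ) (x : A → G → ℝ) (hx : IsFPM x) :
    (∃ p : G → ℝ, IsHZEquilibrium u x p) ↔ (∃ q : G → ℝ, IsHZEarningsEquilibrium u x q) := by
  obtain ⟨hx0, hxrow, hxcol⟩ := hx
  constructor
  · rintro ⟨p, hfpm, hp0, hbud, hopt⟩
    set s : ℝ := ∑ j, p j with hs_def
    have hs : 0 ≤ s := Finset.sum_nonneg fun j _ => hp0 j
    set c : ℝ := 2 + s with hc_def
    have hc : 0 < c - 1 := by simp only [hc_def]; linarith
    refine ⟨fun j => (c - p j) / (c - 1), hfpm, ?_, ?_, ?_⟩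
    · intro j
      apply div_nonneg _ hc.le
      have hj : p j ≤ s := Finset.single_le_sum (fun k _ => hp0 k) (Finset.mem_univ j)
      simp only [hc_def]; linarith
    · intro i
      rw [affine_sum c p (x i) (hxrow i), le_div_iff₀ hc]
      have := hbud i; linarith
    · intro i y hy0 hy1 hqy
      rw [affine_sum c p y hy1, le_div_iff₀ hc] at hqy
      have hpy : ∑ j, p j * y j ≤ 1 := by linarith
      obtain ⟨h1, h2⟩ := hopt i y hy0 hy1 hpy
      refine ⟨h1, fun heq => ?_⟩
      have h3 := h2 heq
      rw [affine_sum c p y hy1, affine_sum c p (x i) (hxrow i), div_le_div_iff_of_pos_right hc]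
      linarith
  · rintro ⟨q, hfpm, hq0, hbud, hopt⟩
    set s : ℝ := ∑ j, q j with hs_def
    have hs : 0 ≤ s := Finset.sum_nonneg fun j _ => hq0 j
    set c : ℝ := 2 + s with hc_def
    have hc : 0 < c - 1 := by simp only [hc_def]; linarith
    refine ⟨fun j => (c - q j) / (c - 1), hfpm, ?_, ?_, ?_⟩
    · intro j
      apply div_nonneg _ hc.le
      have hj : q j ≤ s := Finset.single_le_sum (fun k _ => hq0 k) (Finset.mem_univ j)
      simp only [hc_def]; linarith
    · intro i
      rw [affine_sum c q (x i) (hxrow i), div_le_one hc]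
      have := hbud i; linarith
    · intro i y hy0 hy1 hpy
      rw [affine_sum c q y hy1, div_le_one hc] at hpy
      have hqy : 1 ≤ ∑ j, q j * y j := by linarith
      obtain ⟨h1, h2⟩ := hopt i y hy0 hy1 hqy
      refine ⟨h1, fun heq => ?_⟩
      have h3 := h2 heq
      rw [affine_sum c q y hy1, affine_sum c q (x i) (hxrow i), div_le_div_iff_of_pos_right hc]
      linarith
end

section
/- Suppose the agents A are partitioned into k groups, where all agents in group g share the same utility vector v_g over G, and let the contracted instance have one representative agent per group g with demand d_g equal to the size of group g and utility vector v_g. If y is an envy-free and Pareto-optimal fractional allocation in the contracted demand instance, then the FPM x in the original instance defined by x_{ij} = y_{g(i), j} / d_{g(i)} (where g(i) is the group of agent i) is envy-free and Pareto-optimal in the original instance. -/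
open Finset

/-- An FPM is envy-free if no agent prefers another agent's bundle to their own. -/
def EnvyFree {A G : Type*} [Fintype A] [Fintype G] (u : A → G → ℝ) (x : A → G → ℝ) : Prop :=
  ∀ i i' : A, ∑ j, u i j * x i' j ≤ ∑ j, u i j * x i j

/-- Pareto-optimality of an FPM. -/
def ParetoOptimal {A G : Type*} [Fintype A] [Fintype G]
    (u : A → G → ℝ) (x : A → G → ℝ) : Prop :=
  ¬ ∃ y : A → G → ℝ, IsFPM y ∧
    (∀ i, ∑ j, u i j * x i j ≤ ∑ j, u i j * y i j) ∧
    (∃ i, ∑ j, u i j * x i j < ∑ j, u i j * y i j)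

/-- A fractional allocation for representative agents with demands. -/
def IsDemandAllocation {k : ℕ} {G : Type*} [Fintype G]
    (d : Fin k → ℝ) (y : Fin k → G → ℝ) : Prop :=
  (∀ g j, 0 ≤ y g j) ∧ (∀ g, ∑ j, y g j = d g) ∧ (∀ j, ∑ g, y g j = 1)

/-- Envy-freeness with demands: envy is measured on a utility-per-demand basis. -/
def EnvyFreeDemand {k : ℕ} {G : Type*} [Fintype G]
    (d : Fin k → ℝ) (v : Fin k → G → ℝ) (y : Fin k → G → ℝ) : Prop :=
  ∀ g g' : Fin k, (∑ j, v g j * y g' j) / d g' ≤ (∑ j, v g j * y g j) / d g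

/-- Pareto-optimality among all fractional allocations with demands. -/
def ParetoOptimalDemand {k : ℕ} {G : Type*} [Fintype G]
    (d : Fin k → ℝ) (v : Fin k → G → ℝ) (y : Fin k → G → ℝ) : Prop :=
  ¬ ∃ z : Fin k → G → ℝ, IsDemandAllocation d z ∧
    (∀ g, ∑ j, v g j * y g j ≤ ∑ j, v g j * z g j) ∧
    (∃ g, ∑ j, v g j * y g j < ∑ j, v g j * z g j)

/-- If all agents in each group share the same utility vector and y is
an EF+PO allocation of the contracted demand instance (one representative per group,
demand = group size), then distributing each group's bundle equally among its members
yields an EF+PO fractional perfect matching of the original instance. -/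
theorem contracted_EFPO_lifts {A G : Type*} [Fintype A] [Fintype G]
    (hcard : Fintype.card A = Fintype.card G)
    (k : ℕ) (grp : A → Fin k) (v : Fin k → G → ℝ) (u : A → G → ℝ)
    (hu : ∀ i, u i = v (grp i))
    (d : Fin k → ℕ)
    (hd : ∀ g, d g = (Finset.univ.filter fun i => grp i = g).card)
    (hdpos : ∀ g, 0 < d g)
    (y : Fin k → G → ℝ)
    (hy : IsDemandAllocation (fun g => (d g : ℝ)) y)
    (hyef : EnvyFreeDemand (fun g => (d g : ℝ)) v y)
    (hypo : ParetoOptimalDemand (fun g => (d g : ℝ)) v y)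
    (x : A → G → ℝ)
    (hxdef : ∀ i j, x i j = y (grp i) j / (d (grp i) : ℝ)) :
    IsFPM x ∧ EnvyFree u x ∧ ParetoOptimal u x := by
  classical
  have hdne : ∀ g, (d g : ℝ) ≠ 0 := fun g => Nat.cast_ne_zero.mpr (hdpos g).ne'
  -- utility of i from bundle of group g', divided form
  have hval : ∀ (i : A) (g' : Fin k), ∑ j, u i j * (y g' j / (d g' : ℝ))
      = (∑ j, v (grp i) j * y g' j) / (d g' : ℝ) := by
    intro i g'
    rw [Finset.sum_div]
    refine Finset.sum_congr rfl fun j _ => ?_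
    rw [hu i]
    ring
  have hxval : ∀ (i i' : A), ∑ j, u i j * x i' j
      = (∑ j, v (grp i) j * y (grp i') j) / (d (grp i') : ℝ) := by
    intro i i'
    rw [← hval i (grp i')]
    exact Finset.sum_congr rfl fun j _ => by rw [hxdef]
  have hfpm : IsFPM x := by
    refine ⟨fun i j => ?_, fun i => ?_, fun j => ?_⟩
    · rw [hxdef]; exact div_nonneg (hy.1 _ _) (Nat.cast_nonneg _)
    · simp only [hxdef, div_eq_mul_inv, ← Finset.sum_mul]
      rw [hy.2.1]
      exact mul_inv_cancel₀ (hdne _)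
    · rw [← Finset.sum_fiberwise_of_maps_to (g := grp) (t := Finset.univ)
        (fun i _ => Finset.mem_univ _)]
      rw [← hy.2.2 j]
      refine Finset.sum_congr rfl fun g _ => ?_
      have : ∀ i ∈ Finset.univ.filter (fun i => grp i = g), x i j = y g j / (d g : ℝ) := by
        intro i hi
        rw [hxdef, (Finset.mem_filter.mp hi).2]
      rw [Finset.sum_congr rfl this, Finset.sum_const, ← hd g, nsmul_eq_mul,
        mul_div_cancel₀ _ (hdne g)]
  refine ⟨hfpm, ?_, ?_⟩
  · intro i i'
    rw [hxval i i', hxval i i]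
    exact hyef (grp i) (grp i')
  · rintro ⟨z, hz, hge, i₀, hlt⟩
    apply hypo
    refine ⟨fun g j => ∑ i ∈ Finset.univ.filter (fun i => grp i = g), z i j, ?_, ?_, ?_⟩
    · refine ⟨fun g j => Finset.sum_nonneg fun i _ => hz.1 i j, fun g => ?_, fun j => ?_⟩
      · rw [Finset.sum_comm]
        have : ∀ i ∈ Finset.univ.filter (fun i => grp i = g), ∑ j, z i j = 1 :=
          fun i _ => hz.2.1 i
        rw [Finset.sum_congr rfl this, Finset.sum_const, ← hd g, nsmul_eq_mul, mul_one]
      · rw [Finset.sum_fiberwise_of_maps_to (g := grp) (t := Finset.univ)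
          (fun i _ => Finset.mem_univ _)]
        exact hz.2.2 j
    · -- key: group value identities
      intro g
      have h1 : ∑ j, v g j * y g j
          = ∑ i ∈ Finset.univ.filter (fun i => grp i = g), ∑ j, u i j * x i j := by
        have : ∀ i ∈ Finset.univ.filter (fun i => grp i = g),
            ∑ j, u i j * x i j = (∑ j, v g j * y g j) / (d g : ℝ) := by
          intro i hi
          rw [hxval i i, (Finset.mem_filter.mp hi).2]
        rw [Finset.sum_congr rfl this, Finset.sum_const, ← hd g, nsmul_eq_mul,
          mul_div_cancel₀ _ (hdne g)]
      have h2 : ∑ j, v g j * ∑ i ∈ Finset.univ.filter (fun i => grp i = g), z i j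
          = ∑ i ∈ Finset.univ.filter (fun i => grp i = g), ∑ j, u i j * z i j := by
        simp only [Finset.mul_sum]
        rw [Finset.sum_comm]
        refine Finset.sum_congr rfl fun i hi => Finset.sum_congr rfl fun j _ => ?_
        rw [hu i, (Finset.mem_filter.mp hi).2]
      rw [h1, h2]
      exact Finset.sum_le_sum fun i _ => hge i
    · refine ⟨grp i₀, ?_⟩
      have h1 : ∑ j, v (grp i₀) j * y (grp i₀) j
          = ∑ i ∈ Finset.univ.filter (fun i => grp i = grp i₀), ∑ j, u i j * x i j := by
        have : ∀ i ∈ Finset.univ.filter (fun i => grp i = grp i₀),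
            ∑ j, u i j * x i j = (∑ j, v (grp i₀) j * y (grp i₀) j) / (d (grp i₀) : ℝ) := by
          intro i hi
          rw [hxval i i, (Finset.mem_filter.mp hi).2]
        rw [Finset.sum_congr rfl this, Finset.sum_const, ← hd (grp i₀), nsmul_eq_mul,
          mul_div_cancel₀ _ (hdne (grp i₀))]
      have h2 : ∑ j, v (grp i₀) j * ∑ i ∈ Finset.univ.filter (fun i => grp i = grp i₀), z i j
          = ∑ i ∈ Finset.univ.filter (fun i => grp i = grp i₀), ∑ j, u i j * z i j := by
        simp only [Finset.mul_sum]
        rw [Finset.sum_comm]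
        refine Finset.sum_congr rfl fun i hi => Finset.sum_congr rfl fun j _ => ?_
        rw [hu i, (Finset.mem_filter.mp hi).2]
      rw [h1, h2]
      refine Finset.sum_lt_sum (fun i _ => hge i) ⟨i₀, ?_, hlt⟩
      simp
end
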